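/- Let θ : [0,L] → ℝ be Lipschitz with θ(0)=0, θ(L)=π, generating an axisymmetric C^{1,1} surface (x(s)=∫₀ˢcos θ > 0 on (0,L), x(L)=0), and let θ⋆ be its folding into [0,π] (so cos θ⋆ = cos θ, sin θ⋆ = |sin θ|). Then ∫₀ᴸ |sin θ(s) + θ'(s)x(s)| ds ≥ ∫₀ᴸ (sin θ⋆(s) + (θ⋆)'(s)·x(s)) ds, where both sides use the same x since x⋆ = x. -/

import Mathlib

open Real Set intervalIntegral

/-- The folding of a real number into `[0, π]`: the distance from `y` to the
nearest multiple of `2π`.  It coincides with the piecewise description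
`y - 2kπ` for `y ∈ [2kπ, (2k+1)π)` and `2kπ - y` for `y ∈ [(2k-1)π, 2kπ)`. -/
noncomputable def fold (y : ℝ) : ℝ :=
  |y - 2 * Real.pi * (round (y / (2 * Real.pi)) : ℤ)|

/-!
Write `θ⋆ = fold ∘ θ`. Where `sin θ ≠ 0`, `fold` is locally `±(y - 2kπ)` with the sign of
`sin θ`, so the integrand `sin θ⋆ + (θ⋆)' x` equals `± (sin θ + θ' x)`. Where `sin θ = 0`,
`sin θ⋆ = 0` and, `fold` being 1-Lipschitz, `|(θ⋆)'| ≤ |θ'|`. Either way the left integrand is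
bounded by `|sin θ + θ' x|` at every point where (a Lipschitz extension of) `θ` is
differentiable, i.e. almost everywhere by Rademacher's theorem; both integrands are bounded.
-/

open MeasureTheory Filter Topology

lemma abs_sub_two_pi_mul (y : ℝ) (k : ℤ) : |y - 2 * π * k| = 2 * π * |y / (2 * π) - k| := by
  have h : y - 2 * π * k = 2 * π * (y / (2 * π) - k) := by field_simp
  rw [h, abs_mul, abs_of_pos two_pi_pos]

lemma fold_le_abs_sub (y : ℝ) (k : ℤ) : fold y ≤ |y - 2 * π * k| := by
  rw [fold, abs_sub_two_pi_mul, abs_sub_two_pi_mul]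
  exact mul_le_mul_of_nonneg_left (round_le _ _) two_pi_pos.le

lemma fold_le_pi (y : ℝ) : fold y ≤ π := by
  rw [fold, abs_sub_two_pi_mul]
  linarith [mul_le_mul_of_nonneg_left (abs_sub_round (y / (2 * π))) two_pi_pos.le]

lemma fold_eq_of_abs_lt {y : ℝ} {k : ℤ} (h : |y - 2 * π * k| < π) :
    fold y = |y - 2 * π * k| := by
  have hk : round (y / (2 * π)) = k := by
    rw [abs_sub_two_pi_mul] at h
    obtain ⟨h₁, h₂⟩ := abs_lt.mp (lt_of_mul_lt_mul_left (h.trans_eq (by ring)) two_pi_pos.le :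
      |y / (2 * π) - k| < 1 / 2)
    exact round_eq_iff.mpr ⟨by linarith, by linarith⟩
  rw [fold, hk]

lemma lipschitzWith_fold : LipschitzWith 1 fold :=
  LipschitzWith.of_le_add fun a b => by
    calc fold a ≤ |a - 2 * π * (round (b / (2 * π)) : ℤ)| := fold_le_abs_sub a _
      _ ≤ |b - 2 * π * (round (b / (2 * π)) : ℤ)| + |a - b| := by
          rw [add_comm]; exact abs_sub_le _ _ _
      _ = fold b + dist a b := by rw [Real.dist_eq]; rfl

lemma sin_sub_two_pi_mul (y : ℝ) (k : ℤ) : sin (y - 2 * π * k) = sin y := by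
  rw [← sin_sub_int_mul_two_pi y k]; ring_nf

lemma sin_fold (y : ℝ) : sin (fold y) = |sin y| := by
  have hnonneg : 0 ≤ sin (fold y) := sin_nonneg_of_nonneg_of_le_pi (abs_nonneg _) (fold_le_pi y)
  rw [← abs_of_nonneg hnonneg, fold]
  rcases abs_choice (y - 2 * π * (round (y / (2 * π)) : ℤ)) with h | h <;>
    simp only [h, sin_neg, abs_neg, sin_sub_two_pi_mul]

lemma hasDerivAt_fold {y : ℝ} (hy : sin y ≠ 0) : HasDerivAt fold (SignType.sign (sin y)) y := by
  set k := round (y / (2 * π))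
  set d := y - 2 * π * k
  have hsin : sin d = sin y := sin_sub_two_pi_mul y k
  have hd : d ≠ 0 := fun h => hy (by rw [← hsin, h, sin_zero])
  have hdπ : |d| < π := by
    refine (fold_le_pi y).lt_of_ne fun h => hy ?_
    rw [← hsin]
    rcases abs_eq pi_pos.le |>.mp h with h | h
    · rw [show d = π from h, sin_pi]
    · rw [show d = -π from h, sin_neg, sin_pi, neg_zero]
  have hsign : SignType.sign (sin y) = SignType.sign d := by
    rw [← hsin]
    rcases hd.lt_or_gt with h | h
    · rw [sign_neg h, sign_neg (sin_neg_of_neg_of_neg_pi_lt h (neg_lt_of_abs_lt hdπ))]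
    · rw [sign_pos h, sign_pos (sin_pos_of_pos_of_lt_pi h (lt_of_abs_lt hdπ))]
  have hloc : fold =ᶠ[𝓝 y] fun v => |v - 2 * π * k| :=
    ((continuous_abs.comp (continuous_sub_right _)).continuousAt.eventually_lt
      continuousAt_const hdπ).mono fun v hv => fold_eq_of_abs_lt hv
  rw [hsign]
  exact ((hasDerivAt_abs hd).comp y ((hasDerivAt_id y).sub_const _)).congr_of_eventuallyEq
    hloc |>.congr_deriv (mul_one _)

lemma abs_deriv_comp_le {φ g : ℝ → ℝ} {K : NNReal} {s : ℝ} (hφ : LipschitzWith K φ)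
    (hg : DifferentiableAt ℝ g s) : |deriv (fun t => φ (g t)) s| ≤ K * |deriv g s| := by
  by_cases hφg : DifferentiableAt ℝ (fun t => φ (g t)) s
  · refine le_of_tendsto_of_tendsto (hasDerivAt_iff_tendsto_slope.mp hφg.hasDerivAt).abs
      ((hasDerivAt_iff_tendsto_slope.mp hg.hasDerivAt).abs.const_mul (K : ℝ)) ?_
    filter_upwards [self_mem_nhdsWithin] with t ht
    have hts : 0 < |t - s| := abs_pos.mpr (sub_ne_zero.mpr ht)
    simp only [slope_def_field, abs_div, mul_div_assoc']
    gcongr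
    simpa only [Real.dist_eq] using hφ.dist_le_mul (g t) (g s)
  · rw [deriv_zero_of_not_differentiableAt hφg, abs_zero]
    positivity

lemma sin_fold_add_deriv_mul_le {ψ : ℝ → ℝ} {s : ℝ} (hψ : DifferentiableAt ℝ ψ s) (x : ℝ) :
    sin (fold (ψ s)) + deriv (fun t => fold (ψ t)) s * x ≤ |sin (ψ s) + deriv ψ s * x| := by
  by_cases hs : sin (ψ s) = 0
  · have hderiv : |deriv (fun t => fold (ψ t)) s| ≤ |deriv ψ s| := by
      simpa using abs_deriv_comp_le lipschitzWith_fold hψ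
    rw [sin_fold, hs, abs_zero, zero_add, zero_add, abs_mul]
    calc _ ≤ |deriv (fun t => fold (ψ t)) s| * |x| := (le_abs_self _).trans (abs_mul _ _).le
      _ ≤ |deriv ψ s| * |x| := by gcongr
  · rw [show deriv (fun t => fold (ψ t)) s = _ from
      ((hasDerivAt_fold hs).comp s hψ.hasDerivAt).deriv, sin_fold, ← sign_mul_self]
    calc _ = (SignType.sign (sin (ψ s)) : ℝ) * (sin (ψ s) + deriv ψ s * x) := by ring
      _ ≤ |sin (ψ s) + deriv ψ s * x| := by
        rcases Ne.lt_or_gt hs with h | h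
        · simpa [sign_neg h] using neg_le_abs (sin (ψ s) + deriv ψ s * x)
        · simpa [sign_pos h] using le_abs_self (sin (ψ s) + deriv ψ s * x)

lemma intervalIntegrable_sin_add_deriv_mul {φ x : ℝ → ℝ} {K : NNReal} {a b : ℝ}
    (hφ : LipschitzWith K φ) (hx : ContinuousOn x (uIcc a b)) :
    IntervalIntegrable (fun s => sin (φ s) + deriv φ s * x s) volume a b := by
  have hderiv : IntervalIntegrable (deriv φ) volume a b :=
    (intervalIntegrable_const (c := (K : ℝ))).mono_fun (measurable_deriv φ).aestronglyMeasurable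
      (ae_of_all _ fun s => by simpa using norm_deriv_le_of_lipschitz hφ)
  exact ((continuous_sin.comp hφ.continuous).intervalIntegrable a b).add
    (hderiv.mul_continuousOn hx)

theorem stmt_16_general (L : ℝ) (hL : 0 < L) (θ : ℝ → ℝ) (K : NNReal)
    (hθ : LipschitzOnWith K θ (Set.Icc 0 L)) :
    ∫ s in (0:ℝ)..L,
        (Real.sin (fold (θ s))
          + deriv (fun t => fold (θ t)) s * ∫ t in (0:ℝ)..s, Real.cos (θ t))
      ≤ ∫ s in (0:ℝ)..L,
        |Real.sin (θ s) + deriv θ s * ∫ t in (0:ℝ)..s, Real.cos (θ t)| := by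
  obtain ⟨ψ, hψ, hθψ⟩ := hθ.extend_real
  set x : ℝ → ℝ := fun s => ∫ t in (0:ℝ)..s, cos (ψ t)
  have hx : Continuous x :=
    continuous_primitive (fun a b => (continuous_cos.comp hψ.continuous).intervalIntegrable a b) 0
  have hloc : ∀ s ∈ Ioo 0 L, θ =ᶠ[𝓝 s] ψ ∧ ∫ t in (0:ℝ)..s, cos (θ t) = x s := fun s hs =>
    ⟨eventually_of_mem (Icc_mem_nhds hs.1 hs.2) hθψ, integral_congr fun t ht =>
      congrArg cos (hθψ (uIcc_subset_Icc ⟨le_rfl, hL.le⟩ ⟨hs.1.le, hs.2.le⟩ ht))⟩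
  have hloc_fold : ∀ s ∈ Ioo 0 L, (fun t => fold (θ t)) =ᶠ[𝓝 s] fun t => fold (ψ t) :=
    fun s hs => (hloc s hs).1.mono fun t ht => congrArg fold ht
  calc _ = ∫ s in (0:ℝ)..L, (sin (fold (ψ s)) + deriv (fun t => fold (ψ t)) s * x s) :=
        integral_congr_Ioo_of_le hL.le fun s hs => by
          simp only [(hloc s hs).2, (hloc_fold s hs).deriv_eq, (hloc s hs).1.eq_of_nhds]
    _ ≤ ∫ s in (0:ℝ)..L, |sin (ψ s) + deriv ψ s * x s| := by
        refine intervalIntegral.integral_mono_ae hL.le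
          (intervalIntegrable_sin_add_deriv_mul (lipschitzWith_fold.comp hψ) hx.continuousOn)
          (intervalIntegrable_sin_add_deriv_mul hψ hx.continuousOn).abs ?_
        filter_upwards [hψ.ae_differentiableAt_of_real] with s hs
        exact sin_fold_add_deriv_mul_le hs (x s)
    _ = _ := integral_congr_Ioo_of_le hL.le fun s hs => by
          simp only [(hloc s hs).2, (hloc s hs).1.deriv_eq, (hloc s hs).1.eq_of_nhds]

theorem stmt_16 (L : ℝ) (hL : 0 < L) (θ : ℝ → ℝ) (K : NNReal)
    (hθ : LipschitzOnWith K θ (Set.Icc 0 L))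
    (h0 : θ 0 = 0) (hLval : θ L = Real.pi)
    (hxL : (∫ t in (0:ℝ)..L, Real.cos (θ t)) = 0)
    (hxpos : ∀ s ∈ Set.Ioo (0:ℝ) L, 0 < ∫ t in (0:ℝ)..s, Real.cos (θ t)) :
    ∫ s in (0:ℝ)..L,
        (Real.sin (fold (θ s))
          + deriv (fun t => fold (θ t)) s * ∫ t in (0:ℝ)..s, Real.cos (θ t))
      ≤ ∫ s in (0:ℝ)..L,
        |Real.sin (θ s) + deriv θ s * ∫ t in (0:ℝ)..s, Real.cos (θ t)| :=
  stmt_16_general L hL θ K hθ
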